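/- arXiv:2507.07329 — 3 statements merged into one kernel-verified Lean document; each statement's English description precedes it below -/
import Mathlib

section
/- Let K be the complexification of a commutative fusion ring with character basis {μ_j}. A character μ_j is group-like (i.e. μ_j ⋆ μ_{j#} = μ_0, where μ_{j#}(x) := conj(μ_j(x)) on basis elements) if and only if |μ_j(x)| = FPdim(x) for every basis element x. -/
open scoped BigOperators

/-- A commutative fusion ring: nonnegative integer fusion coefficients on a basis
`x_0, ..., x_m` (`x_0` the unit), a duality involution, and Frobenius-Perron
dimensions `d i > 0`. -/
structure FusionData (m : ℕ) where
  N : Fin (m + 1) → Fin (m + 1) → Fin (m + 1) → ℕ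
  dual : Fin (m + 1) → Fin (m + 1)
  dual_invol : ∀ i, dual (dual i) = i
  N_comm : ∀ i j k, N i j k = N j i k
  N_assoc : ∀ i j l k, ∑ t, N i j t * N t l k = ∑ t, N j l t * N i t k
  N_one : ∀ j k, N 0 j k = if k = j then 1 else 0
  N_pair : ∀ i j, N i j 0 = if j = dual i then 1 else 0
  d : Fin (m + 1) → ℝ
  d_pos : ∀ i, 0 < d i
  d_one : d 0 = 1
  d_mul : ∀ i j, d i * d j = ∑ k, (N i j k : ℝ) * d k
  d_dual : ∀ i, d (dual i) = d i

/-- A character of the complexified fusion ring, given by its values on the basis. -/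
def IsChar {m : ℕ} (F : FusionData m) (μ : Fin (m + 1) → ℂ) : Prop :=
  μ 0 = 1 ∧
  (∀ i j, μ i * μ j = ∑ k, (F.N i j k : ℂ) * μ k) ∧
  (∀ i, μ (F.dual i) = starRingEnd ℂ (μ i)) ∧
  (∀ i, ‖μ i‖ ≤ F.d i)

/-- The dual `⋆` product: `(μ ⋆ ν)(x_k / d_k) = μ(x_k / d_k) · ν(x_k / d_k)`. -/
noncomputable def starProd {m : ℕ} (F : FusionData m) (μ ν : Fin (m + 1) → ℂ) :
    Fin (m + 1) → ℂ :=
  fun i => μ i * ν i / (F.d i : ℂ)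

/-- A group-like character: `μ ⋆ μ# = μ_0 = FPdim`, where `μ#` is the complex
conjugate character. -/
def IsGroupLike {m : ℕ} (F : FusionData m) (μ : Fin (m + 1) → ℂ) : Prop :=
  IsChar F μ ∧ ∀ i, starProd F μ (fun k => starRingEnd ℂ (μ k)) i = (F.d i : ℂ)

/-- The coefficient of the basis element `x_k` in the `n`-th power of `x_a`. -/
def powCoeff {m : ℕ} (F : FusionData m) (a : Fin (m + 1)) : ℕ → Fin (m + 1) → ℕ
  | 0, k => if k = 0 then 1 else 0
  | n + 1, k => ∑ l, powCoeff F a n l * F.N a l k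

theorem Complex.mul_conj_div_ofReal_eq_ofReal_iff {z : ℂ} {r : ℝ} (hr : 0 < r) :
    z * starRingEnd ℂ z / r = r ↔ ‖z‖ = r := by
  rw [Complex.mul_conj, div_eq_iff (Complex.ofReal_ne_zero.mpr hr.ne'), ← Complex.ofReal_mul,
    Complex.ofReal_inj, ← Complex.sq_norm, ← sq]
  exact sq_eq_sq₀ (norm_nonneg z) hr.le

theorem groupLike_iff_abs_eq_fpdim_general {m : ℕ} (F : FusionData m) (μ : Fin (m + 1) → ℂ) :
    (∀ i, starProd F μ (fun k => starRingEnd ℂ (μ k)) i = (F.d i : ℂ)) ↔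
      (∀ i, ‖μ i‖ = F.d i) :=
  forall_congr' fun i => Complex.mul_conj_div_ofReal_eq_ofReal_iff (F.d_pos i)

/-- A character `μ_j` is group-like (`μ_j ⋆ μ_{j#} = μ_0`) iff
`|μ_j(x)| = FPdim(x)` for every basis element `x`. -/
theorem groupLike_iff_abs_eq_fpdim {m : ℕ} (F : FusionData m) (μ : Fin (m + 1) → ℂ)
    (h : IsChar F μ) :
    (∀ i, starProd F μ (fun k => starRingEnd ℂ (μ k)) i = (F.d i : ℂ)) ↔
      (∀ i, ‖μ i‖ = F.d i) :=
  groupLike_iff_abs_eq_fpdim_general F μ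
end

section
/- Let K be the complexification of a commutative fusion ring, and let G be the set of group-like characters (those μ with |μ(x)| = FPdim(x) for all basis elements x). Then G is a group under the ⋆ product, with identity μ_0 = FPdim, and inverse μ ↦ μ# given by complex conjugation. -/
open scoped BigOperators

open ComplexConjugate

lemma eq_of_sum_mul_eq_of_norm_le_one {ι : Type*} {s : Finset ι} {w : ι → ℝ} {z : ι → ℂ}
    {a : ℂ} (hw : ∀ k ∈ s, 0 ≤ w k) (hz : ∀ k ∈ s, ‖z k‖ ≤ 1) (ha : ‖a‖ = 1)
    (h : ∑ k ∈ s, (w k : ℂ) * z k = (∑ k ∈ s, w k : ℝ) * a) {k : ι} (hk : k ∈ s)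
    (hwk : w k ≠ 0) : z k = a := by
  -- After rotating by `conj a`, real parts at most `1` average to `1`, so each equals `1`.
  have hy : ∀ l ∈ s, ‖conj a * z l‖ ≤ 1 := fun l hl => by
    simpa [ha] using hz l hl
  have hle : ∀ l ∈ s, w l * (conj a * z l).re ≤ w l := fun l hl =>
    mul_le_of_le_one_right (hw l hl) ((Complex.re_le_norm _).trans (hy l hl))
  have hsum : ∑ l ∈ s, w l * (conj a * z l).re = ∑ l ∈ s, w l := by
    have := congrArg (fun x => (conj a * x).re) h
    simp only [Finset.mul_sum, Complex.re_sum] at this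
    rw [mul_left_comm, Complex.conj_mul', ha] at this
    simpa [mul_left_comm (conj a)] using this
  have hre : (conj a * z k).re = 1 := by
    have := (Finset.sum_eq_sum_iff_of_le hle).mp hsum k hk
    exact (mul_eq_left₀ hwk).mp this
  have hone : conj a * z k = 1 :=
    Complex.ext (by simpa using hre)
      (by simpa using RCLike.im_eq_zero_of_le (le_of_le_of_eq (hy k hk) hre.symm))
  calc z k = (a * conj a) * z k := by rw [Complex.mul_conj', ha]; simp
    _ = a := by rw [mul_assoc, hone, mul_one]

namespace FusionData

variable {m : ℕ} (F : FusionData m)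

lemma d_ofReal_ne_zero (i : Fin (m + 1)) : (F.d i : ℂ) ≠ 0 :=
  Complex.ofReal_ne_zero.mpr (F.d_pos i).ne'

lemma ofReal_d_mul (i j : Fin (m + 1)) :
    (F.d i : ℂ) * F.d j = ∑ k, (F.N i j k : ℂ) * F.d k := by
  exact_mod_cast F.d_mul i j

lemma d_mul_mul_eq_sum {u : Fin (m + 1) → ℂ} {i j : Fin (m + 1)}
    (hu : ∀ k, F.N i j k ≠ 0 → u k = u i * u j) :
    (F.d i * u i) * (F.d j * u j) = ∑ k, (F.N i j k : ℂ) * (F.d k * u k) := by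
  calc (F.d i * u i) * (F.d j * u j) = (∑ k, (F.N i j k : ℂ) * F.d k) * (u i * u j) := by
        rw [← ofReal_d_mul]; ring
    _ = ∑ k, (F.N i j k : ℂ) * (F.d k * u k) := by
        rw [Finset.sum_mul]
        refine Finset.sum_congr rfl fun k _ => ?_
        by_cases hk : F.N i j k = 0
        · simp [hk]
        · rw [hu k hk]; ring

end FusionData

lemma starProd_apply {m : ℕ} (F : FusionData m) (μ ν : Fin (m + 1) → ℂ) (i : Fin (m + 1)) :
    starProd F μ ν i = F.d i * (μ i / F.d i * (ν i / F.d i)) := by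
  have := F.d_ofReal_ne_zero i
  simp only [starProd]
  field_simp

section GroupLike

variable {m : ℕ} {F : FusionData m} {μ ν : Fin (m + 1) → ℂ}

lemma isGroupLike_iff : IsGroupLike F μ ↔ IsChar F μ ∧ ∀ i, ‖μ i‖ = F.d i := by
  refine and_congr_right fun _ => forall_congr' fun i => ?_
  rw [starProd, Complex.mul_conj', div_eq_iff (F.d_ofReal_ne_zero i), ← sq, ← Complex.ofReal_pow,
    ← Complex.ofReal_pow, Complex.ofReal_inj, sq_eq_sq₀ (norm_nonneg _) (F.d_pos i).le]

lemma IsGroupLike.norm_eq (hμ : IsGroupLike F μ) (i : Fin (m + 1)) : ‖μ i‖ = F.d i :=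
  (isGroupLike_iff.mp hμ).2 i

lemma IsGroupLike.norm_div_d (hμ : IsGroupLike F μ) (i : Fin (m + 1)) : ‖μ i / F.d i‖ = 1 := by
  rw [norm_div, hμ.norm_eq, Complex.norm_of_nonneg (F.d_pos i).le, div_self (F.d_pos i).ne']

/-- `μ i μ j = ∑ N_ij^k μ k` is a sum of vectors of total length `∑ N_ij^k d k = d i d j`,
which is also the length of `μ i μ j`: an equality case of the triangle inequality. -/
lemma IsGroupLike.div_d_eq_mul (hμ : IsGroupLike F μ) {i j k : Fin (m + 1)} (hk : F.N i j k ≠ 0) :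
    μ k / F.d k = μ i / F.d i * (μ j / F.d j) := by
  refine eq_of_sum_mul_eq_of_norm_le_one (s := Finset.univ) (w := fun l => F.N i j l * F.d l)
    (fun l _ => by have := F.d_pos l; positivity) (fun l _ => (hμ.norm_div_d l).le)
    (by rw [norm_mul, hμ.norm_div_d, hμ.norm_div_d, one_mul]) ?_ (Finset.mem_univ k)
    (mul_ne_zero (Nat.cast_ne_zero.mpr hk) (F.d_pos k).ne')
  have hdi := F.d_ofReal_ne_zero i
  have hdj := F.d_ofReal_ne_zero j
  push_cast
  simp only [mul_assoc, mul_div_cancel₀ _ (F.d_ofReal_ne_zero _)]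
  rw [← hμ.1.2.1]
  field_simp
  rw [← F.ofReal_d_mul]
  ring

lemma IsGroupLike.norm_starProd (hμ : IsGroupLike F μ) (hν : IsGroupLike F ν) (i : Fin (m + 1)) :
    ‖starProd F μ ν i‖ = F.d i := by
  rw [starProd_apply, norm_mul, norm_mul, hμ.norm_div_d, hν.norm_div_d,
    Complex.norm_of_nonneg (F.d_pos i).le, one_mul, mul_one]

lemma IsGroupLike.starProd (hμ : IsGroupLike F μ) (hν : IsGroupLike F ν) :
    IsGroupLike F (starProd F μ ν) := by
  refine isGroupLike_iff.mpr ⟨⟨?_, fun i j => ?_, fun i => ?_, fun i => ?_⟩, hμ.norm_starProd hν⟩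
  · simp [_root_.starProd, hμ.1.1, hν.1.1, F.d_one]
  · simp only [starProd_apply]
    exact F.d_mul_mul_eq_sum (u := fun k => μ k / F.d k * (ν k / F.d k)) fun k hk => by
      rw [hμ.div_d_eq_mul hk, hν.div_d_eq_mul hk]; ring
  · simp [_root_.starProd, hμ.1.2.2.1 i, hν.1.2.2.1 i, F.d_dual]
  · exact (hμ.norm_starProd hν i).le

lemma IsGroupLike.conj (hμ : IsGroupLike F μ) : IsGroupLike F (fun k => conj (μ k)) := by
  obtain ⟨⟨h0, hmul, hdual, -⟩, hnorm⟩ := isGroupLike_iff.mp hμ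
  refine isGroupLike_iff.mpr ⟨⟨by simp [h0], fun i j => ?_, fun i => by simp [hdual],
    fun i => by simp [hnorm]⟩, fun i => by simp [hnorm]⟩
  simpa using congrArg conj (hmul i j)

end GroupLike

namespace FusionData

variable {m : ℕ} (F : FusionData m)

lemma isGroupLike_d : IsGroupLike F (fun i => (F.d i : ℂ)) := by
  refine isGroupLike_iff.mpr ⟨⟨by simp [F.d_one], fun i j => F.ofReal_d_mul i j,
    fun i => by simp [F.d_dual], fun i => ?_⟩, fun i => ?_⟩ <;>
  simp [abs_of_pos (F.d_pos i)]

end FusionData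

section StarProd

variable {m : ℕ} (F : FusionData m) (μ ν ρ : Fin (m + 1) → ℂ)

lemma starProd_comm : starProd F μ ν = starProd F ν μ := by
  funext i
  simp only [starProd, mul_comm (μ i)]

lemma starProd_assoc : starProd F (starProd F μ ν) ρ = starProd F μ (starProd F ν ρ) := by
  funext i
  simp only [starProd]
  ring

lemma starProd_d : starProd F μ (fun i => (F.d i : ℂ)) = μ := by
  funext i
  simp only [starProd, mul_div_cancel_right₀ _ (F.d_ofReal_ne_zero i)]

lemma d_starProd : starProd F (fun i => (F.d i : ℂ)) μ = μ := by
  rw [starProd_comm, starProd_d]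

end StarProd

/-- The group-like characters form a group under the `⋆` product, with
identity `μ_0 = FPdim` and inverse given by complex conjugation. -/
theorem groupLike_characters_form_group {m : ℕ} (F : FusionData m) :
    IsGroupLike F (fun i => (F.d i : ℂ)) ∧
    (∀ μ ν, IsGroupLike F μ → IsGroupLike F ν → IsGroupLike F (starProd F μ ν)) ∧
    (∀ μ, IsGroupLike F μ →
      starProd F (fun i => (F.d i : ℂ)) μ = μ ∧ starProd F μ (fun i => (F.d i : ℂ)) = μ) ∧
    (∀ μ, IsGroupLike F μ → IsGroupLike F (fun k => starRingEnd ℂ (μ k)) ∧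
      starProd F μ (fun k => starRingEnd ℂ (μ k)) = (fun i => (F.d i : ℂ)) ∧
      starProd F (fun k => starRingEnd ℂ (μ k)) μ = (fun i => (F.d i : ℂ))) ∧
    (∀ μ ν ρ, IsGroupLike F μ → IsGroupLike F ν → IsGroupLike F ρ →
      starProd F (starProd F μ ν) ρ = starProd F μ (starProd F ν ρ)) := by
  refine ⟨F.isGroupLike_d, fun μ ν hμ hν => hμ.starProd hν,
    fun μ _ => ⟨d_starProd F μ, starProd_d F μ⟩, fun μ hμ => ?_,
    fun μ ν ρ _ _ _ => starProd_assoc F μ ν ρ⟩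
  have hinv : starProd F μ (fun k => conj (μ k)) = fun i => (F.d i : ℂ) := funext hμ.2
  exact ⟨hμ.conj, hinv, by rw [starProd_comm, hinv]⟩
end

section
/- Let μ be a character of a commutative fusion ring and suppose |μ(x)| = FPdim(x) for a basis element x. Then for every basis element y appearing as a constituent of some tensor power x^{⊗m}, one has |μ(y)| = FPdim(y). Consequently, if x generates the whole fusion ring (every basis element appears in some power of x), then μ is group-like. -/
open scoped BigOperators

/-!
Expanding `x^n` in the basis gives `FPdim(x)^n = Σ_y N_y FPdim(y)` and `μ(x)^n = Σ_y N_y μ(y)`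
with `N_y ≥ 0`. Since `|μ(x)| = FPdim(x)` and `|μ(y)| ≤ FPdim(y)`, the chain
`FPdim(x)^n = |Σ_y N_y μ(y)| ≤ Σ_y N_y |μ(y)| ≤ Σ_y N_y FPdim(y)` is an equality, which forces
`|μ(y)| = FPdim(y)` whenever `N_y ≠ 0`.
-/

open Finset

lemma pow_eq_sum_powCoeff {m : ℕ} {R : Type*} [CommSemiring R] (F : FusionData m)
    (f : Fin (m + 1) → R) (hf_one : f 0 = 1) (a : Fin (m + 1))
    (hf_mul : ∀ l, f a * f l = ∑ k, (F.N a l k : R) * f k) (n : ℕ) :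
    f a ^ n = ∑ k, (powCoeff F a n k : R) * f k := by
  induction n with
  | zero => simp [powCoeff, hf_one]
  | succ n ih =>
    calc f a ^ (n + 1) = ∑ l, (powCoeff F a n l : R) * (f a * f l) := by
          rw [pow_succ', ih, mul_sum]
          exact sum_congr rfl fun l _ => by ring
      _ = ∑ l, ∑ k, (powCoeff F a n l : R) * ((F.N a l k : R) * f k) := by
          simp only [hf_mul, mul_sum]
      _ = ∑ k, (powCoeff F a (n + 1) k : R) * f k := by
          rw [sum_comm]
          simp only [powCoeff, Nat.cast_sum, Nat.cast_mul, sum_mul]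
          exact sum_congr rfl fun k _ => sum_congr rfl fun l _ => by ring

lemma norm_eq_of_sum_le_norm_sum_nsmul {ι E : Type*} [Fintype ι] [SeminormedAddCommGroup E]
    (c : ι → ℕ) (v : ι → E) (w : ι → ℝ) (hvw : ∀ i, ‖v i‖ ≤ w i)
    (hsum : ∑ i, (c i : ℝ) * w i ≤ ‖∑ i, c i • v i‖) {k : ι} (hk : c k ≠ 0) :
    ‖v k‖ = w k := by
  have hle : ∀ i ∈ univ, (c i : ℝ) * ‖v i‖ ≤ c i * w i :=
    fun i _ => mul_le_mul_of_nonneg_left (hvw i) (Nat.cast_nonneg _)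
  have htriangle : ‖∑ i, c i • v i‖ ≤ ∑ i, (c i : ℝ) * ‖v i‖ :=
    (norm_sum_le _ _).trans (sum_le_sum fun i _ => norm_nsmul_le)
  have heq : ∑ i, (c i : ℝ) * ‖v i‖ = ∑ i, (c i : ℝ) * w i :=
    le_antisymm (sum_le_sum hle) (hsum.trans htriangle)
  have hck : (c k : ℝ) ≠ 0 := Nat.cast_ne_zero.mpr hk
  exact mul_left_cancel₀ hck ((sum_eq_sum_iff_of_le hle).mp heq k (mem_univ k))

/-- If `|μ(x)| = FPdim(x)` then `|μ(y)| = FPdim(y)` for every constituent `y`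
of a tensor power of `x`; consequently if `x` generates the fusion ring, `μ`
is group-like. -/
theorem abs_eq_fpdim_propagates {m : ℕ} (F : FusionData m)
    (μ : Fin (m + 1) → ℂ) (h : IsChar F μ)
    (a : Fin (m + 1)) (ha : ‖μ a‖ = F.d a) :
    (∀ n k, powCoeff F a n k ≠ 0 → ‖μ k‖ = F.d k) ∧
    ((∀ k, ∃ n, powCoeff F a n k ≠ 0) → ∀ k, ‖μ k‖ = F.d k) := by
  obtain ⟨hμ_one, hμ_mul, -, hμ_le⟩ := h
  have constituent : ∀ n k, powCoeff F a n k ≠ 0 → ‖μ k‖ = F.d k := by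
    intro n k hk
    refine norm_eq_of_sum_le_norm_sum_nsmul (powCoeff F a n) μ F.d hμ_le ?_ hk
    calc ∑ k, (powCoeff F a n k : ℝ) * F.d k = F.d a ^ n :=
          (pow_eq_sum_powCoeff F F.d F.d_one a (F.d_mul a) n).symm
      _ = ‖μ a ^ n‖ := by rw [norm_pow, ha]
      _ ≤ ‖∑ k, powCoeff F a n k • μ k‖ := by
          rw [pow_eq_sum_powCoeff F μ hμ_one a (hμ_mul a) n]
          simp only [nsmul_eq_mul, le_refl]
  refine ⟨constituent, fun hgen k => ?_⟩
  obtain ⟨n, hn⟩ := hgen k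
  exact constituent n k hn
end
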